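/- For every n ≥ 0, the words φ^n(2) and φ^n(11) agree on their first g_{n+1} - 1 letters and differ at the g_{n+1}-st letter, where g_n = ⌊2^{n+1}/3⌋ and φ is the morphism φ(1)=2, φ(2)=211. -/

import Mathlib

/-!
Write `B n = φⁿ(2)` and `A n = φⁿ(11)`. Since `φ(2) = 2·11` and `φ(11) = 2·2`, we have
`B (n+1) = B n ++ A n` and `A (n+1) = B n ++ B n`, so the first disagreement of `B (n+1)` and
`A (n+1)` is that of `A n` and `B n`, shifted by `|B n|`. The lengths `|B n|` satisfy the
Jacobsthal recurrence `|B (n+2)| = |B (n+1)| + 2 |B n|`, and so do the differences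
`g (n+2) - g (n+1)`; hence `|B n| + g (n+1) = g (n+2)`.
-/

/-- The morphism φ on the alphabet {1,2}: φ(1) = 2, φ(2) = 211. -/
def phi : ℕ → List ℕ
  | 1 => [2]
  | 2 => [2, 1, 1]
  | _ => []

/-- Extension of φ to words by concatenation. -/
def phiW (w : List ℕ) : List ℕ := w.flatMap phi

/-- g_n = ⌊2^(n+1)/3⌋. -/
def g (n : ℕ) : ℕ := 2 ^ (n + 1) / 3

namespace List

variable {α : Type*}

/-- `u` and `v` agree on their first `k` letters and differ at position `k`
(counted from `0`; a missing letter counts as different from any letter). -/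
def FirstDiffAt (u v : List α) (k : ℕ) : Prop :=
  u.take k = v.take k ∧ u[k]? ≠ v[k]?

theorem FirstDiffAt.symm {u v : List α} {k : ℕ} (h : FirstDiffAt u v k) : FirstDiffAt v u k :=
  ⟨h.1.symm, h.2.symm⟩

theorem FirstDiffAt.append_left {u v : List α} {k : ℕ} (h : FirstDiffAt u v k) (w : List α) :
    FirstDiffAt (w ++ u) (w ++ v) (w.length + k) := by
  refine ⟨by rw [take_length_add_append, take_length_add_append, h.1], ?_⟩
  rw [getElem?_append_right (Nat.le_add_right _ _), getElem?_append_right (Nat.le_add_right _ _),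
    Nat.add_sub_cancel_left]
  exact h.2

end List

theorem g_add_three (n : ℕ) : g (n + 3) = g (n + 2) + 2 * g (n + 1) + 1 := by
  simp only [g, pow_succ]
  have hndvd : ¬ 3 ∣ 2 ^ n := fun h => by
    have := Nat.prime_three.dvd_of_dvd_pow h
    omega
  generalize 2 ^ n = x at hndvd
  obtain hx | hx : x % 3 = 1 ∨ x % 3 = 2 := by omega
  all_goals omega

theorem phiW_append (u v : List ℕ) : phiW (u ++ v) = phiW u ++ phiW v :=
  List.flatMap_append

theorem iterate_phiW_append (n : ℕ) (u v : List ℕ) :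
    phiW^[n] (u ++ v) = phiW^[n] u ++ phiW^[n] v := by
  induction n generalizing u v with
  | zero => rfl
  | succ n ih => rw [Function.iterate_succ_apply, phiW_append, ih]; rfl

theorem iterate_phiW_two_succ (n : ℕ) :
    phiW^[n + 1] [2] = phiW^[n] [2] ++ phiW^[n] [1, 1] := by
  rw [Function.iterate_succ_apply, ← iterate_phiW_append]
  rfl

theorem iterate_phiW_one_one_succ (n : ℕ) :
    phiW^[n + 1] [1, 1] = phiW^[n] [2] ++ phiW^[n] [2] := by
  rw [Function.iterate_succ_apply, ← iterate_phiW_append]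
  rfl

theorem length_iterate_phiW_two_add_g : ∀ n : ℕ, (phiW^[n] [2]).length + g (n + 1) = g (n + 2)
  | 0 => rfl
  | 1 => rfl
  | n + 2 => by
    have hn := length_iterate_phiW_two_add_g n
    have hn1 : (phiW^[n + 1] [2]).length + g (n + 2) = g (n + 3) :=
      length_iterate_phiW_two_add_g (n + 1)
    have hlen : (phiW^[n + 2] [2]).length =
        (phiW^[n + 1] [2]).length + 2 * (phiW^[n] [2]).length := by
      rw [iterate_phiW_two_succ, iterate_phiW_one_one_succ]
      simp only [List.length_append]
      ring
    have hg4 : g (n + 4) = g (n + 3) + 2 * g (n + 2) + 1 := g_add_three (n + 1)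
    have hg3 := g_add_three n
    show (phiW^[n + 2] [2]).length + g (n + 3) = g (n + 4)
    omega

theorem firstDiffAt_iterate_phiW (n : ℕ) :
    (phiW^[n] [2]).FirstDiffAt (phiW^[n] [1, 1]) (g (n + 1) - 1) := by
  induction n with
  | zero => exact ⟨rfl, by decide⟩
  | succ n ih =>
    have hidx : g (n + 2) - 1 = (phiW^[n] [2]).length + (g (n + 1) - 1) := by
      have hg : 1 ≤ g (n + 1) := by
        have := Nat.one_le_two_pow (n := n)
        simp only [g, pow_succ]
        omega
      have := length_iterate_phiW_two_add_g n
      omega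
    rw [iterate_phiW_two_succ, iterate_phiW_one_one_succ, hidx]
    exact ih.symm.append_left _

theorem phi_two_eleven_agree (n : ℕ) :
    (phiW^[n] [2]).take (g (n + 1) - 1) = (phiW^[n] [1, 1]).take (g (n + 1) - 1) ∧
      (phiW^[n] [2])[g (n + 1) - 1]? ≠ (phiW^[n] [1, 1])[g (n + 1) - 1]? :=
  firstDiffAt_iterate_phiW n
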